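/- For any tree T with at least three vertices and any positive integer t, the diameter of the generalized Sierpiński graph S(T,t) is D(S(T,t)) = (3·2^t − 2t − 3)·D(T) − 4·(2^t − t − 1), where D(T) is the diameter of T. -/

import Mathlib

/-- The generalized Sierpiński graph `S(G,t)` of a base graph `G`: vertices are words of
length `t` over the vertex set (encoded as `Fin t → V`); two words are adjacent iff they are
of the form `w x y^{d-1}` and `w y x^{d-1}` for some edge `{x,y}` of `G`. -/
def SierpinskiGraph {V : Type*} (G : SimpleGraph V) (t : ℕ) : SimpleGraph (Fin t → V) where
  Adj u v := ∃ i : Fin t, G.Adj (u i) (v i) ∧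
      (∀ j : Fin t, j < i → u j = v j) ∧
      (∀ j : Fin t, i < j → u j = v i ∧ v j = u i)
  symm := by
    constructor
    rintro u v ⟨i, h1, h2, h3⟩
    exact ⟨i, h1.symm, fun j hj => (h2 j hj).symm, fun j hj => ⟨(h3 j hj).2, (h3 j hj).1⟩⟩
  loopless := by
    constructor
    rintro u ⟨i, h1, -, -⟩
    exact G.loopless.irrefl _ h1

/-- Eccentricity of a vertex: the maximum distance to any other vertex. -/
noncomputable def eccent {V : Type*} (G : SimpleGraph V) (v : V) : ℕ := ⨆ u, G.dist v u

/-- Diameter: maximum eccentricity. -/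
noncomputable def graphDiam {V : Type*} (G : SimpleGraph V) : ℕ := ⨆ v, eccent G v

/-- Radius: minimum eccentricity. -/
noncomputable def graphRadius {V : Type*} (G : SimpleGraph V) : ℕ := ⨅ v, eccent G v

/-!
Write a word of length `t + 1` as `a u` with `a` a vertex of `T`. The copy `a S(T, t)` sits
isometrically in `S(T, t + 1)`, and every edge of `T` is a bridge, so a shortest path from `a u`
to `b v`, `a ≠ b`, runs through the copies along the path `a = a₀, a₁, …, a_k = b` of `T`,
passing from one to the next through the edge `aᵢ aᵢ₊₁ᵗ — aᵢ₊₁ aᵢᵗ`: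
`d(a u, b v) = d(u, a₁ᵗ) + d(a_{k-1}ᵗ, v) + k + 2 (k - 1) (2ᵗ - 1)`.
In particular `d(xᵗ, yᵗ) = (2ᵗ - 1) d(x, y)`, and induction on `t` gives the eccentricity
`(2ᵗ - 1) ecc(c) + (D - 2) (2ᵗ - t - 1)` of `cᵗ`. Two facts about trees enter: some farthest
vertex from any vertex is an end of a diametral path (by the four-point condition), and
`ecc(a₁) + d(a, b) < 2 D` for the neighbour `a₁` of `a` towards `b`. Maximising the distance
formula over pairs of words gives
`D(S(T, t + 1)) = 4 (2ᵗ - 1) (D - 1) + 2 (D - 2) (2ᵗ - t - 1) + D`.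
-/

namespace SimpleGraph

variable {V W : Type*} {G : SimpleGraph V} {H : SimpleGraph W}

theorem Walk.exists_length_le_of_eq_or_adj (f : V → W)
    (hf : ∀ ⦃u v⦄, G.Adj u v → f u = f v ∨ H.Adj (f u) (f v)) {x y : V} (p : G.Walk x y) :
    ∃ q : H.Walk (f x) (f y), q.length ≤ p.length := by
  induction p with
  | nil => exact ⟨.nil, le_rfl⟩
  | cons h _ ih =>
    obtain ⟨q, hq⟩ := ih
    rcases hf h with heq | hadj
    · exact ⟨q.copy heq.symm rfl, by simp only [Walk.length_copy, Walk.length_cons]; omega⟩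
    · exact ⟨.cons hadj q, by simpa using hq⟩

theorem Reachable.dist_le_of_eq_or_adj (f : V → W)
    (hf : ∀ ⦃u v⦄, G.Adj u v → f u = f v ∨ H.Adj (f u) (f v)) {x y : V}
    (hxy : G.Reachable x y) : H.dist (f x) (f y) ≤ G.dist x y := by
  obtain ⟨p, hp⟩ := hxy.exists_walk_length_eq_dist
  obtain ⟨q, hq⟩ := p.exists_length_le_of_eq_or_adj f hf
  exact (dist_le q).trans (hp ▸ hq)

theorem Walk.exists_length_add_one_add_le_of_crossing {S : V → Prop} {p q : V}
    (hcross : ∀ ⦃u v⦄, G.Adj u v → S u → ¬S v → u = p ∧ v = q) {x y : V} (w : G.Walk x y)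
    (hx : S x) (hy : ¬S y) :
    ∃ (w₁ : G.Walk x p) (w₂ : G.Walk q y), w₁.length + 1 + w₂.length ≤ w.length := by
  induction w with
  | nil => exact absurd hx hy
  | @cons a b c h w ih =>
    by_cases hb : S b
    · obtain ⟨w₁, w₂, hw⟩ := ih hb hy
      exact ⟨.cons h w₁, w₂, by simp only [Walk.length_cons]; omega⟩
    · obtain ⟨rfl, rfl⟩ := hcross h hx hb
      exact ⟨.nil, w, by simp [Nat.add_comm]⟩

theorem Connected.dist_eq_of_crossing (hG : G.Connected) {S : V → Prop} {p q x y : V}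
    (hpq : G.Adj p q) (hcross : ∀ ⦃u v⦄, G.Adj u v → S u → ¬S v → u = p ∧ v = q)
    (hx : S x) (hy : ¬S y) : G.dist x y = G.dist x p + 1 + G.dist q y := by
  apply le_antisymm
  · have h₁ := hG.dist_triangle (u := x) (v := p) (w := y)
    have h₂ := hG.dist_triangle (u := p) (v := q) (w := y)
    rw [dist_eq_one_iff_adj.mpr hpq] at h₂
    omega
  · obtain ⟨w, hw⟩ := hG.exists_walk_length_eq_dist x y
    obtain ⟨w₁, w₂, hle⟩ := w.exists_length_add_one_add_le_of_crossing hcross hx hy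
    have := dist_le w₁
    have := dist_le w₂
    omega

theorem Connected.exists_adj_dist_add_one_eq (hG : G.Connected) {x y : V} (hxy : x ≠ y) :
    ∃ z, G.Adj x z ∧ G.dist z y + 1 = G.dist x y := by
  obtain ⟨p, hp⟩ := hG.exists_walk_length_eq_dist x y
  cases p with
  | nil => exact absurd rfl hxy
  | @cons _ z _ h q =>
    refine ⟨z, h, le_antisymm ?_ ?_⟩
    · have := dist_le q
      simp only [Walk.length_cons] at hp
      omega
    · have := hG.dist_triangle (u := x) (v := z) (w := y)
      rw [dist_eq_one_iff_adj.mpr h] at this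
      omega

open Classical in
/-- The neighbour of `x` on a shortest path from `x` to `y`; junk value `x` if there is none. -/
noncomputable def stepToward (G : SimpleGraph V) (x y : V) : V :=
  if h : ∃ z, G.Adj x z ∧ G.dist z y + 1 = G.dist x y then h.choose else x

theorem Connected.stepToward_spec (hG : G.Connected) {x y : V} (hxy : x ≠ y) :
    G.Adj x (G.stepToward x y) ∧ G.dist (G.stepToward x y) y + 1 = G.dist x y := by
  have h := hG.exists_adj_dist_add_one_eq hxy
  rw [stepToward, dif_pos h]
  exact h.choose_spec

theorem Connected.adj_stepToward (hG : G.Connected) {x y : V} (hxy : x ≠ y) :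
    G.Adj x (G.stepToward x y) :=
  (hG.stepToward_spec hxy).1

theorem Connected.dist_stepToward_add_one (hG : G.Connected) {x y : V} (hxy : x ≠ y) :
    G.dist (G.stepToward x y) y + 1 = G.dist x y :=
  (hG.stepToward_spec hxy).2

namespace IsTree

/-- Prepending `x` to shortest paths from `z` and `z'` to `y` gives two paths from `x` to `y`,
which coincide in a tree. -/
theorem eq_of_adj_of_dist_add_one_eq (hT : G.IsTree) {x y z z' : V} (hz : G.Adj x z)
    (hz' : G.Adj x z') (h : G.dist z y + 1 = G.dist x y) (h' : G.dist z' y + 1 = G.dist x y) :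
    z = z' := by
  obtain ⟨q, hq⟩ := hT.connected.exists_walk_length_eq_dist z y
  obtain ⟨q', hq'⟩ := hT.connected.exists_walk_length_eq_dist z' y
  have hp := (Walk.cons hz q).isPath_of_length_eq_dist (by simp [hq, h])
  have hp' := (Walk.cons hz' q').isPath_of_length_eq_dist (by simp [hq', h'])
  have := congrArg Subtype.val ((hT.isAcyclic.subsingleton_path x y).elim ⟨_, hp⟩ ⟨_, hp'⟩)
  simp only [Walk.cons.injEq] at this
  exact this.1

theorem stepToward_eq (hT : G.IsTree) {x y z : V} (hz : G.Adj x z)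
    (h : G.dist z y + 1 = G.dist x y) : G.stepToward x y = z := by
  have hxy : x ≠ y := by rintro rfl; simp at h
  exact hT.eq_of_adj_of_dist_add_one_eq (hT.connected.adj_stepToward hxy) hz
    (hT.connected.dist_stepToward_add_one hxy) h

theorem stepToward_eq_of_adj (hT : G.IsTree) {x y : V} (h : G.Adj x y) :
    G.stepToward x y = y :=
  hT.stepToward_eq h (by simp [dist_eq_one_iff_adj.mpr h])

theorem dist_lt_of_not_dist_lt (hT : G.IsTree) {a z v : V} (haz : G.Adj a z)
    (hv : ¬G.dist v a < G.dist v z) : G.dist v z < G.dist v a :=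
  lt_of_le_of_ne (not_lt.mp hv) (hT.dist_ne_of_adj v haz).symm

/-- The only edge from the `a`-side of an edge `a z` of a tree to its `z`-side is `a z`. -/
theorem eq_of_adj_of_dist_lt (hT : G.IsTree) {a z u v : V} (haz : G.Adj a z)
    (huv : G.Adj u v) (hu : G.dist u a < G.dist u z) (hv : G.dist v z < G.dist v a) :
    u = a ∧ v = z := by
  have h₁ := haz.diff_dist_adj (u := u)
  have h₂ := haz.diff_dist_adj (u := v)
  have h₃ := huv.diff_dist_adj (u := a)
  have h₄ := huv.diff_dist_adj (u := z)
  simp only [dist_comm (u := a), dist_comm (u := z)] at h₃ h₄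
  by_cases hua : u = a
  · subst hua
    rw [dist_eq_one_iff_adj.mpr huv.symm] at hv
    exact ⟨rfl, hT.connected.dist_eq_zero_iff.mp (by omega)⟩
  · -- the neighbour `w` of `u` towards `a` is also closer to `z`, so it must be `v`
    have hw := hT.connected.adj_stepToward hua
    have hwa := hT.connected.dist_stepToward_add_one hua
    have h₅ := hw.diff_dist_adj (u := z)
    have h₆ := haz.diff_dist_adj (u := G.stepToward u a)
    simp only [dist_comm (u := z)] at h₅
    have hwv : G.stepToward u a = v :=
      hT.eq_of_adj_of_dist_add_one_eq (y := z) hw huv (by omega) (by omega)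
    rw [hwv] at hwa
    omega

theorem dist_eq_dist_add_one_add_dist (hT : G.IsTree) {a z x y : V} (haz : G.Adj a z)
    (hx : G.dist x a < G.dist x z) (hy : G.dist y z < G.dist y a) :
    G.dist x y = G.dist x a + 1 + G.dist z y :=
  hT.connected.dist_eq_of_crossing (S := fun v => G.dist v a < G.dist v z) haz
    (fun _ _ huv hu hv => hT.eq_of_adj_of_dist_lt haz huv hu (hT.dist_lt_of_not_dist_lt haz hv))
    hx (by omega)

theorem stepToward_eq_stepToward (hT : G.IsTree) {x u v : V} (huv : G.Adj u v)
    (hu : u ≠ x) (hv : v ≠ x) : G.stepToward x u = G.stepToward x v := by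
  have hz := hT.connected.adj_stepToward hu.symm
  have hzu := hT.connected.dist_stepToward_add_one hu.symm
  refine (hT.stepToward_eq hz ?_).symm
  rcases hT.dist_eq_dist_add_one_of_adj v hz with h | h
  · rw [G.dist_comm (u := x), h, G.dist_comm (u := v)]
  · have hvx : G.dist v x < G.dist v (G.stepToward x u) := by omega
    have hux : G.dist u (G.stepToward x u) < G.dist u x := by
      rw [dist_comm, dist_comm (u := u)]; omega
    exact absurd (hT.eq_of_adj_of_dist_lt hz huv.symm hvx hux).1 hv

/-- The four-point condition: trees are `0`-hyperbolic. -/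
theorem dist_add_dist_le_max (hT : G.IsTree) (x y z w : V) :
    G.dist x y + G.dist z w ≤ max (G.dist x z + G.dist y w) (G.dist x w + G.dist y z) := by
  suffices ∀ n x, G.dist x y = n →
      G.dist x y + G.dist z w ≤ max (G.dist x z + G.dist y w) (G.dist x w + G.dist y z) from
    this _ x rfl
  intro n
  induction n with
  | zero =>
    intro x hxy
    obtain rfl := hT.connected.dist_eq_zero_iff.mp hxy
    have := hT.connected.dist_triangle (u := z) (v := x) (w := w)
    simp only [dist_comm] at *
    omega
  | succ n ih =>
    intro x hxy
    have hne : x ≠ y := by rintro rfl; simp at hxy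
    obtain ⟨x', hx', hx'y⟩ := hT.connected.exists_adj_dist_add_one_eq hne
    -- split the tree at the edge `x x'`; `y` lies on the `x'`-side
    have hy : G.dist y x' < G.dist y x := by rw [dist_comm (u := y), dist_comm (u := y)]; omega
    have hx : G.dist x x < G.dist x x' := by simp [dist_eq_one_iff_adj.mpr hx']
    have near : ∀ v, G.dist v x < G.dist v x' → G.dist v y = G.dist v x + 1 + G.dist x' y :=
      fun v hv => hT.dist_eq_dist_add_one_add_dist hx' hv hy
    have far : ∀ v, ¬G.dist v x < G.dist v x' → G.dist x v = 1 + G.dist x' v := fun v hv => by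
      simpa using hT.dist_eq_dist_add_one_add_dist hx' hx (hT.dist_lt_of_not_dist_lt hx' hv)
    by_cases hz : G.dist z x < G.dist z x' <;> by_cases hw : G.dist w x < G.dist w x'
    · have := near z hz; have := near w hw
      have := hT.connected.dist_triangle (u := z) (v := x) (w := w)
      simp only [dist_comm] at *
      omega
    · have := near z hz; have := far w hw
      have := hT.dist_eq_dist_add_one_add_dist hx' hz (hT.dist_lt_of_not_dist_lt hx' hw)
      simp only [dist_comm] at *
      omega
    · have := near w hw; have := far z hz
      have := hT.dist_eq_dist_add_one_add_dist hx' hw (hT.dist_lt_of_not_dist_lt hx' hz)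
      simp only [dist_comm] at *
      omega
    · have := far z hz; have := far w hw
      have := ih x' (by omega)
      simp only [dist_comm] at *
      omega

end IsTree

end SimpleGraph

open SimpleGraph hiding eccent

section Eccentricity

variable {V : Type*} (G : SimpleGraph V)

theorem eccent_le {v : V} {n : ℕ} (h : ∀ u, G.dist v u ≤ n) : eccent G v ≤ n :=
  ciSup_le' h

theorem graphDiam_le {n : ℕ} (h : ∀ v u, G.dist v u ≤ n) : graphDiam G ≤ n :=
  ciSup_le' fun v => eccent_le G (h v)

variable [Finite V]

theorem dist_le_eccent (v u : V) : G.dist v u ≤ eccent G v :=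
  le_ciSup (Set.finite_range _).bddAbove u

theorem exists_dist_eq_eccent (v : V) : ∃ u, G.dist v u = eccent G v :=
  have : Nonempty V := ⟨v⟩
  exists_eq_ciSup_of_finite

theorem eccent_le_graphDiam (v : V) : eccent G v ≤ graphDiam G :=
  le_ciSup (Set.finite_range _).bddAbove v

theorem dist_le_graphDiam (v u : V) : G.dist v u ≤ graphDiam G :=
  (dist_le_eccent G v u).trans (eccent_le_graphDiam G v)

theorem exists_dist_eq_graphDiam [Nonempty V] : ∃ v u, G.dist v u = graphDiam G := by
  obtain ⟨v, hv⟩ : ∃ v, eccent G v = graphDiam G := exists_eq_ciSup_of_finite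
  obtain ⟨u, hu⟩ := exists_dist_eq_eccent G v
  exact ⟨v, u, hu.trans hv⟩

variable {G}

theorem eccent_le_eccent_add_one_of_adj (hG : G.Connected) {u v : V} (h : G.Adj u v) :
    eccent G u ≤ eccent G v + 1 :=
  eccent_le G fun w => (hG.dist_triangle (v := v)).trans <| by
    rw [dist_eq_one_iff_adj.mpr h, add_comm]
    grw [dist_le_eccent G v w]

theorem exists_dist_eq_eccent_and_eccent_eq_graphDiam (hT : G.IsTree) (c : V) :
    ∃ a, G.dist c a = eccent G c ∧ eccent G a = graphDiam G := by
  have : Nonempty V := ⟨c⟩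
  obtain ⟨p, q, hpq⟩ := exists_dist_eq_graphDiam G
  obtain ⟨w, hw⟩ := exists_dist_eq_eccent G c
  have hp : eccent G p = graphDiam G :=
    (eccent_le_graphDiam G p).antisymm (hpq ▸ dist_le_eccent G p q)
  have hq : eccent G q = graphDiam G :=
    (eccent_le_graphDiam G q).antisymm (hpq ▸ dist_comm (G := G) ▸ dist_le_eccent G q p)
  have := dist_le_eccent G c p
  have := dist_le_eccent G c q
  have := dist_le_graphDiam G w p
  have := dist_le_graphDiam G w q
  rcases le_max_iff.mp (hT.dist_add_dist_le_max c w p q) with h | h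
  · exact ⟨p, by omega, hp⟩
  · exact ⟨q, by omega, hq⟩

theorem eccent_stepToward_add_one_le_graphDiam_or (hT : G.IsTree) {a c : V} (hac : a ≠ c) :
    eccent G (G.stepToward a c) + 1 ≤ graphDiam G ∨
      eccent G (G.stepToward a c) + G.dist a c ≤ eccent G c + 1 := by
  set z := G.stepToward a c
  have hz : G.Adj a z := hT.connected.adj_stepToward hac
  have hzc : G.dist z c + 1 = G.dist a c := hT.connected.dist_stepToward_add_one hac
  obtain ⟨w, hw⟩ := exists_dist_eq_eccent G z
  have hwz := hz.diff_dist_adj (u := w)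
  rw [dist_comm] at hw
  by_cases hwa : G.dist w a < G.dist w z
  · right
    have hc : G.dist c z < G.dist c a := by rw [dist_comm, dist_comm (u := c)]; omega
    have := hT.dist_eq_dist_add_one_add_dist hz hwa hc
    have := dist_le_eccent G c w
    rw [dist_comm (u := c)] at this
    omega
  · left
    have := hT.dist_lt_of_not_dist_lt hz hwa
    have := dist_le_graphDiam G a w
    rw [dist_comm (u := a)] at this
    omega

theorem eccent_stepToward_add_dist_lt_two_mul_graphDiam (hT : G.IsTree)
    (hD : 2 ≤ graphDiam G) {a c : V} (hac : a ≠ c) :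
    eccent G (G.stepToward a c) + G.dist a c < 2 * graphDiam G := by
  have := dist_le_graphDiam G a c
  have := eccent_le_graphDiam G c
  rcases eccent_stepToward_add_one_le_graphDiam_or hT hac with h | h <;> omega

end Eccentricity

theorem SimpleGraph.IsTree.two_le_graphDiam {V : Type*} [Fintype V] {T : SimpleGraph V}
    (hT : T.IsTree) (hcard : 3 ≤ Fintype.card V) : 2 ≤ graphDiam T := by
  classical
  by_contra! h
  obtain ⟨a, b, c, hab, hac, hbc⟩ := Fintype.two_lt_card_iff.mp hcard
  have hadj : ∀ {x y}, x ≠ y → T.Adj x y := fun {x y} hxy => dist_eq_one_iff_adj.mp <| by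
    have := hT.connected.pos_dist_of_ne hxy
    have := dist_le_graphDiam T x y
    omega
  exact hT.isAcyclic.cliqueFree le_rfl {a, b, c}
    (is3Clique_triple_iff.mpr ⟨hadj hab, hadj hac, hadj hbc⟩)

theorem Nat.two_pow_succ_sub_one (t : ℕ) : 2 ^ (t + 1) - 1 = 2 * (2 ^ t - 1) + 1 := by
  have := Nat.one_le_two_pow (n := t)
  rw [pow_succ]
  omega

theorem Nat.two_pow_succ_sub_succ_sub_one (t : ℕ) :
    2 ^ (t + 1) - (t + 1) - 1 = (2 ^ t - t - 1) + (2 ^ t - 1) := by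
  have := Nat.lt_two_pow_self (n := t)
  rw [pow_succ]
  omega

theorem Fin.const_eq_cons {α : Type*} {n : ℕ} (c : α) :
    (fun _ => c : Fin (n + 1) → α) = Fin.cons c fun _ => c :=
  (Fin.cons_self_tail _).symm

namespace SierpinskiGraph

variable {V : Type*} {G : SimpleGraph V} {t : ℕ}

theorem adj_cons_cons_iff {a b : V} {u v : Fin t → V} :
    (SierpinskiGraph G (t + 1)).Adj (Fin.cons a u) (Fin.cons b v) ↔
      a = b ∧ (SierpinskiGraph G t).Adj u v ∨
        G.Adj a b ∧ u = (fun _ => b) ∧ v = (fun _ => a) := by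
  constructor
  · rintro ⟨i, hadj, hlt, hgt⟩
    induction i using Fin.cases with
    | zero =>
      refine .inr ⟨by simpa using hadj, funext fun j => ?_, funext fun j => ?_⟩
      · simpa using (hgt j.succ j.succ_pos).1
      · simpa using (hgt j.succ j.succ_pos).2
    | succ i =>
      refine .inl ⟨by simpa using hlt 0 i.succ_pos, i, by simpa using hadj,
        fun j hj => ?_, fun j hj => ?_⟩
      · simpa using hlt j.succ (Fin.succ_lt_succ_iff.mpr hj)
      · simpa using hgt j.succ (Fin.succ_lt_succ_iff.mpr hj)
  · rintro (⟨rfl, i, hadj, hlt, hgt⟩ | ⟨hab, rfl, rfl⟩)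
    · refine ⟨i.succ, by simpa using hadj, fun j hj => ?_, fun j hj => ?_⟩
      · induction j using Fin.cases with
        | zero => rfl
        | succ j => simpa using hlt j (Fin.succ_lt_succ_iff.mp hj)
      · induction j using Fin.cases with
        | zero => exact absurd hj (Fin.not_lt_zero _)
        | succ j => simpa using hgt j (Fin.succ_lt_succ_iff.mp hj)
    · refine ⟨0, by simpa using hab, fun j hj => absurd hj (Fin.not_lt_zero _), fun j hj => ?_⟩
      induction j using Fin.cases with
      | zero => exact absurd hj (lt_irrefl _)
      | succ j => simp

theorem adj_cons_cons_same {a : V} {u v : Fin t → V} :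
    (SierpinskiGraph G (t + 1)).Adj (Fin.cons a u) (Fin.cons a v) ↔
      (SierpinskiGraph G t).Adj u v := by
  simp [adj_cons_cons_iff]

theorem adj_cons_const {a b : V} (hab : G.Adj a b) :
    (SierpinskiGraph G (t + 1)).Adj (Fin.cons a fun _ => b) (Fin.cons b fun _ => a) :=
  adj_cons_cons_iff.mpr (.inr ⟨hab, rfl, rfl⟩)

def consHom (a : V) : SierpinskiGraph G t →g SierpinskiGraph G (t + 1) :=
  ⟨fun u => Fin.cons a u, adj_cons_cons_same.mpr⟩

theorem connected (hG : G.Connected) : ∀ t, (SierpinskiGraph G t).Connected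
  | 0 => (connected_iff _).mpr ⟨.of_subsingleton, inferInstance⟩
  | t + 1 => by
    have : Nonempty V := hG.nonempty
    have hcopy (a : V) (u v : Fin t → V) :
        (SierpinskiGraph G (t + 1)).Reachable (Fin.cons a u) (Fin.cons a v) :=
      (connected hG t u v).map (consHom a)
    have hwalk {a b : V} (p : G.Walk a b) (u v : Fin t → V) :
        (SierpinskiGraph G (t + 1)).Reachable (Fin.cons a u) (Fin.cons b v) := by
      induction p generalizing u with
      | nil => exact hcopy _ u v
      | cons hab _ ih => exact (hcopy _ u _).trans ((adj_cons_const hab).reachable.trans (ih _))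
    refine (connected_iff _).mpr ⟨fun x y => ?_, inferInstance⟩
    rw [← Fin.cons_self_tail x, ← Fin.cons_self_tail y]
    exact hwalk (hG _ _).some _ _

variable {T : SimpleGraph V}

theorem dist_cons_cons (hT : T.IsTree) (a : V) (u v : Fin t → V) :
    (SierpinskiGraph T (t + 1)).dist (Fin.cons a u) (Fin.cons a v) =
      (SierpinskiGraph T t).dist u v := by
  classical
  apply le_antisymm
  · exact (connected hT.connected t u v).dist_le_of_eq_or_adj (consHom a)
      fun _ _ h => .inr ((consHom a).map_adj h)
  -- collapse every other copy `b S(T, t)` to the extreme vertex of `a S(T, t)` facing it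
  let ρ : (Fin (t + 1) → V) → Fin t → V := fun w =>
    if w 0 = a then Fin.tail w else fun _ => T.stepToward a (w 0)
  have hρ : ∀ ⦃p q⦄, (SierpinskiGraph T (t + 1)).Adj p q →
      ρ p = ρ q ∨ (SierpinskiGraph T t).Adj (ρ p) (ρ q) := by
    intro p q hpq
    induction p using Fin.consCases with | _ b u' =>
    induction q using Fin.consCases with | _ c v' =>
    rcases adj_cons_cons_iff.mp hpq with ⟨rfl, h⟩ | ⟨hbc, rfl, rfl⟩
    · by_cases hb : b = a
      · simp [ρ, hb, h]
      · simp [ρ, hb]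
    · left
      by_cases hb : b = a
      · subst hb
        simp [ρ, hbc.ne.symm, hT.stepToward_eq_of_adj hbc]
      by_cases hc : c = a
      · subst hc
        simp [ρ, hbc.ne, hT.stepToward_eq_of_adj hbc.symm]
      · simp [ρ, hb, hc, hT.stepToward_eq_stepToward hbc hb hc]
  simpa [ρ] using
    (connected hT.connected (t + 1) (Fin.cons a u) (Fin.cons a v)).dist_le_of_eq_or_adj ρ hρ

theorem dist_cons_cons_eq_add_of_ne (hT : T.IsTree) {a b : V} (hab : a ≠ b) (u v : Fin t → V) :
    (SierpinskiGraph T (t + 1)).dist (Fin.cons a u) (Fin.cons b v) =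
      (SierpinskiGraph T t).dist u (fun _ => T.stepToward a b) + 1 +
        (SierpinskiGraph T (t + 1)).dist (Fin.cons (T.stepToward a b) fun _ => a)
          (Fin.cons b v) := by
  set z := T.stepToward a b
  have haz : T.Adj a z := hT.connected.adj_stepToward hab
  have hzb : T.dist z b + 1 = T.dist a b := hT.connected.dist_stepToward_add_one hab
  -- the edge `a z^t — z a^t` is the only one leaving the words whose first letter is on the
  -- `a`-side of the edge `a z` of `T`
  have hcross : ∀ ⦃p q : Fin (t + 1) → V⦄, (SierpinskiGraph T (t + 1)).Adj p q →
      T.dist (p 0) a < T.dist (p 0) z → ¬T.dist (q 0) a < T.dist (q 0) z →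
      p = Fin.cons a (fun _ => z) ∧ q = Fin.cons z (fun _ => a) := by
    intro p q hpq hp hq
    induction p using Fin.consCases with | _ c u' =>
    induction q using Fin.consCases with | _ d v' =>
    simp only [Fin.cons_zero] at hp hq
    rcases adj_cons_cons_iff.mp hpq with ⟨rfl, -⟩ | ⟨hcd, rfl, rfl⟩
    · exact absurd hp hq
    · obtain ⟨rfl, rfl⟩ :=
        hT.eq_of_adj_of_dist_lt haz hcd hp (hT.dist_lt_of_not_dist_lt haz hq)
      exact ⟨rfl, rfl⟩
  rw [(connected hT.connected (t + 1)).dist_eq_of_crossing (S := fun p => T.dist (p 0) a <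
      T.dist (p 0) z) (adj_cons_const haz) hcross (by simp [dist_eq_one_iff_adj.mpr haz])
      (by simp only [Fin.cons_zero, not_lt, dist_comm (u := b)]; omega), dist_cons_cons hT]

theorem dist_cons_cons_of_ne (hT : T.IsTree)
    (hconst : ∀ x y : V, (SierpinskiGraph T t).dist (fun _ => x) (fun _ => y) =
      (2 ^ t - 1) * T.dist x y)
    {a b : V} (hab : a ≠ b) (u v : Fin t → V) :
    (SierpinskiGraph T (t + 1)).dist (Fin.cons a u) (Fin.cons b v) =
      (SierpinskiGraph T t).dist u (fun _ => T.stepToward a b) +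
        (SierpinskiGraph T t).dist (fun _ => T.stepToward b a) v +
          T.dist a b + (T.dist a b - 1) * (2 * (2 ^ t - 1)) := by
  obtain ⟨n, hn⟩ : ∃ n, T.dist a b = n + 1 :=
    Nat.exists_eq_add_one.mpr (hT.connected.pos_dist_of_ne hab)
  induction n generalizing a u with
  | zero =>
    have hadj : T.Adj a b := dist_eq_one_iff_adj.mp hn
    rw [dist_cons_cons_eq_add_of_ne hT hab, hT.stepToward_eq_of_adj hadj,
      hT.stepToward_eq_of_adj hadj.symm, dist_cons_cons hT, hn]
    omega
  | succ n ih =>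
    rw [dist_cons_cons_eq_add_of_ne hT hab]
    set z := T.stepToward a b
    have haz : T.Adj a z := hT.connected.adj_stepToward hab
    have hzb : T.dist z b + 1 = T.dist a b := hT.connected.dist_stepToward_add_one hab
    have hzb' : z ≠ b := by rintro h; rw [h, dist_self] at hzb; omega
    set z₂ := T.stepToward z b
    have hzz₂ : T.Adj z z₂ := hT.connected.adj_stepToward hzb'
    have hz₂b : T.dist z₂ b + 1 = T.dist z b := hT.connected.dist_stepToward_add_one hzb'
    have haz₂ : T.dist a z₂ = 2 := by
      have := hT.connected.dist_triangle (u := a) (v := z) (w := z₂)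
      have := hT.connected.dist_triangle (u := a) (v := z₂) (w := b)
      rw [dist_eq_one_iff_adj.mpr haz, dist_eq_one_iff_adj.mpr hzz₂] at *
      omega
    rw [ih hzb' _ (by omega), hconst, haz₂,
      hT.stepToward_eq_stepToward haz.symm hzb' hab, hn]
    have : T.dist z b = n + 1 := by omega
    rw [this]
    simp only [Nat.add_sub_cancel]
    ring

theorem dist_const_const (hT : T.IsTree) :
    ∀ t (x y : V), (SierpinskiGraph T t).dist (fun _ => x) (fun _ => y) =
      (2 ^ t - 1) * T.dist x y
  | 0, x, y => by simp [Subsingleton.elim (fun _ : Fin 0 => x) fun _ => y]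
  | t + 1, x, y => by
    obtain rfl | hxy := eq_or_ne x y
    · simp
    rw [Fin.const_eq_cons x, Fin.const_eq_cons y,
      dist_cons_cons_of_ne hT (dist_const_const hT t) hxy,
      dist_const_const hT t, dist_const_const hT t,
      dist_eq_one_iff_adj.mpr (hT.connected.adj_stepToward hxy),
      dist_comm, dist_eq_one_iff_adj.mpr (hT.connected.adj_stepToward hxy.symm)]
    obtain ⟨n, hn⟩ : ∃ n, T.dist x y = n + 1 :=
      Nat.exists_eq_add_one.mpr (hT.connected.pos_dist_of_ne hxy)
    rw [hn, Nat.two_pow_succ_sub_one, Nat.add_sub_cancel]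
    ring

section Finite

variable [Finite V]

theorem eccent_const_succ_le (hT : T.IsTree) (hD : 2 ≤ graphDiam T)
    (ih : ∀ c : V, eccent (SierpinskiGraph T t) (fun _ => c) =
      (2 ^ t - 1) * eccent T c + (graphDiam T - 2) * (2 ^ t - t - 1)) (c : V) :
    eccent (SierpinskiGraph T (t + 1)) (fun _ => c) ≤
      (2 ^ (t + 1) - 1) * eccent T c + (graphDiam T - 2) * (2 ^ (t + 1) - (t + 1) - 1) := by
  refine eccent_le _ fun w => ?_
  induction w using Fin.consCases with | _ b u =>
  rw [Fin.const_eq_cons c, Nat.two_pow_succ_sub_one, Nat.two_pow_succ_sub_succ_sub_one]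
  obtain rfl | hbc := eq_or_ne b c
  · have := dist_le_eccent (SierpinskiGraph T t) (fun _ => b) u
    rw [dist_cons_cons hT, ih] at *
    nlinarith
  · have hu := dist_le_eccent (SierpinskiGraph T t) (fun _ => T.stepToward b c) u
    have hk := dist_le_eccent T c b
    rw [ih] at hu
    rw [dist_cons_cons_of_ne hT (dist_const_const hT t) hbc.symm, dist_const_const hT,
      dist_eq_one_iff_adj.mpr (hT.connected.adj_stepToward hbc.symm)]
    obtain ⟨m, hm⟩ : ∃ m, T.dist c b = m + 1 :=
      Nat.exists_eq_add_one.mpr (hT.connected.pos_dist_of_ne hbc.symm)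
    obtain ⟨d, hd⟩ := Nat.exists_eq_add_of_le' hD
    have key : 1 + eccent T (T.stepToward b c) + 2 * m ≤ 2 * eccent T c + d := by
      have : T.dist b c = m + 1 := T.dist_comm.trans hm
      rcases eccent_stepToward_add_one_le_graphDiam_or hT hbc with h | h <;> omega
    rw [hm, Nat.add_sub_cancel]
    rw [hd, Nat.add_sub_cancel] at hu ⊢
    nlinarith [Nat.mul_le_mul_left (2 ^ t - 1) key]

theorem le_eccent_const_succ (hT : T.IsTree) (hD : 2 ≤ graphDiam T)
    (ih : ∀ c : V, eccent (SierpinskiGraph T t) (fun _ => c) =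
      (2 ^ t - 1) * eccent T c + (graphDiam T - 2) * (2 ^ t - t - 1)) (c : V) :
    (2 ^ (t + 1) - 1) * eccent T c + (graphDiam T - 2) * (2 ^ (t + 1) - (t + 1) - 1) ≤
      eccent (SierpinskiGraph T (t + 1)) (fun _ => c) := by
  obtain ⟨a, hca, ha⟩ := exists_dist_eq_eccent_and_eccent_eq_graphDiam hT c
  have hac : a ≠ c := by rintro rfl; rw [dist_self] at hca; omega
  have hz := eccent_le_eccent_add_one_of_adj hT.connected (hT.connected.adj_stepToward hac)
  obtain ⟨u, hu⟩ := exists_dist_eq_eccent (SierpinskiGraph T t) (fun _ => T.stepToward a c)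
  refine le_trans ?_ (dist_le_eccent _ _ (Fin.cons a u))
  rw [Fin.const_eq_cons c, dist_comm, dist_cons_cons_of_ne hT (dist_const_const hT t) hac,
    dist_comm, hu, ih, dist_const_const hT, dist_comm (u := T.stepToward c a),
    dist_eq_one_iff_adj.mpr (hT.connected.adj_stepToward hac.symm), dist_comm, hca,
    Nat.two_pow_succ_sub_one, Nat.two_pow_succ_sub_succ_sub_one]
  obtain ⟨m, hm⟩ := Nat.exists_eq_add_one.mpr (hT.connected.pos_dist_of_ne hac.symm)
  obtain ⟨d, hd⟩ := Nat.exists_eq_add_of_le' hD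
  have hzd : d + 1 ≤ eccent T (T.stepToward a c) := by omega
  rw [← hca, hm, hd, Nat.add_sub_cancel, Nat.add_sub_cancel]
  nlinarith [Nat.mul_le_mul_left (2 ^ t - 1) hzd]

theorem eccent_const (hT : T.IsTree) (hD : 2 ≤ graphDiam T) :
    ∀ t (c : V), eccent (SierpinskiGraph T t) (fun _ => c) =
      (2 ^ t - 1) * eccent T c + (graphDiam T - 2) * (2 ^ t - t - 1)
  | 0, c => by
    simpa using eccent_le (SierpinskiGraph T 0) (v := fun _ => c) (n := 0) fun u => by
      rw [Subsingleton.elim u fun _ => c, dist_self]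
  | t + 1, c =>
    (eccent_const_succ_le hT hD (eccent_const hT hD t) c).antisymm
      (le_eccent_const_succ hT hD (eccent_const hT hD t) c)

theorem graphDiam_succ_le (hT : T.IsTree) (hD : 2 ≤ graphDiam T) (t : ℕ) :
    graphDiam (SierpinskiGraph T (t + 1)) ≤
      4 * (2 ^ t - 1) * (graphDiam T - 1) + 2 * (graphDiam T - 2) * (2 ^ t - t - 1) +
        graphDiam T := by
  have hecc := eccent_const hT hD t
  obtain ⟨d, hd⟩ := Nat.exists_eq_add_of_le' hD
  refine graphDiam_le _ fun x y => ?_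
  induction x using Fin.consCases with | _ a u =>
  induction y using Fin.consCases with | _ b v =>
  obtain rfl | hab := eq_or_ne a b
  · have hu := dist_le_eccent (SierpinskiGraph T t) (fun _ => a) u
    have hv := dist_le_eccent (SierpinskiGraph T t) (fun _ => a) v
    have := (connected hT.connected t).dist_triangle (u := u) (v := fun _ => a) (w := v)
    have ha := eccent_le_graphDiam T a
    rw [dist_comm] at hu
    rw [hecc, hd, Nat.add_sub_cancel] at hu hv
    rw [dist_cons_cons hT, hd, Nat.add_sub_cancel, show d + 2 - 1 = d + 1 by omega]
    rw [hd] at ha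
    nlinarith [Nat.mul_le_mul_left (2 ^ t - 1) ha]
  · have hu := dist_le_eccent (SierpinskiGraph T t) (fun _ => T.stepToward a b) u
    have hv := dist_le_eccent (SierpinskiGraph T t) (fun _ => T.stepToward b a) v
    have ha := eccent_stepToward_add_dist_lt_two_mul_graphDiam hT hD hab
    have hb := eccent_stepToward_add_dist_lt_two_mul_graphDiam hT hD hab.symm
    have hk := dist_le_graphDiam T a b
    obtain ⟨m, hm⟩ := Nat.exists_eq_add_one.mpr (hT.connected.pos_dist_of_ne hab)
    rw [dist_comm] at hu
    rw [hecc, hd, Nat.add_sub_cancel] at hu hv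
    rw [T.dist_comm, hm] at hb
    rw [hm, hd] at ha hk
    rw [hd] at hb
    rw [dist_cons_cons_of_ne hT (dist_const_const hT t) hab, hm, hd, Nat.add_sub_cancel,
      Nat.add_sub_cancel, show d + 2 - 1 = d + 1 by omega]
    nlinarith [Nat.mul_le_mul_left (2 ^ t - 1)
      (show eccent T (T.stepToward a b) + eccent T (T.stepToward b a) + 2 * m ≤ 4 * d + 4 by
        omega)]

theorem le_graphDiam_succ (hT : T.IsTree) (hD : 2 ≤ graphDiam T) (t : ℕ) :
    4 * (2 ^ t - 1) * (graphDiam T - 1) + 2 * (graphDiam T - 2) * (2 ^ t - t - 1) +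
      graphDiam T ≤ graphDiam (SierpinskiGraph T (t + 1)) := by
  have : Nonempty V := hT.connected.nonempty
  obtain ⟨p, q, hpq⟩ := exists_dist_eq_graphDiam T
  have hne : p ≠ q := by rintro rfl; rw [dist_self] at hpq; omega
  have hlow {a c : V} (hac : T.dist a c = graphDiam T) :
      graphDiam T ≤ eccent T (T.stepToward a c) + 1 := by
    have hac' : a ≠ c := by rintro rfl; rw [dist_self] at hac; omega
    exact (hac ▸ dist_le_eccent T a c).trans
      (eccent_le_eccent_add_one_of_adj hT.connected (hT.connected.adj_stepToward hac'))
  obtain ⟨u, hu⟩ := exists_dist_eq_eccent (SierpinskiGraph T t) (fun _ => T.stepToward p q)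
  obtain ⟨v, hv⟩ := exists_dist_eq_eccent (SierpinskiGraph T t) (fun _ => T.stepToward q p)
  refine le_trans ?_ (dist_le_graphDiam _ (Fin.cons p u) (Fin.cons q v))
  obtain ⟨d, hd⟩ := Nat.exists_eq_add_of_le' hD
  have hp := hlow hpq
  have hq := hlow (T.dist_comm.trans hpq)
  rw [dist_cons_cons_of_ne hT (dist_const_const hT t) hne, dist_comm, hu, hv,
    eccent_const hT hD, eccent_const hT hD, hpq, hd, Nat.add_sub_cancel,
    show d + 2 - 1 = d + 1 by omega]
  rw [hd] at hp hq
  nlinarith [Nat.mul_le_mul_left (2 ^ t - 1) hp, Nat.mul_le_mul_left (2 ^ t - 1) hq]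

end Finite

end SierpinskiGraph

theorem stmt_16_general {V : Type*} [Fintype V] (T : SimpleGraph V) (hT : T.IsTree)
    (hcard : 3 ≤ Fintype.card V) (t : ℕ) :
    graphDiam (SierpinskiGraph T t) =
      (3 * 2 ^ t - 2 * t - 3) * graphDiam T - 4 * (2 ^ t - t - 1) := by
  have hD := hT.two_le_graphDiam hcard
  cases t with
  | zero =>
    simpa using graphDiam_le (SierpinskiGraph T 0) (n := 0) fun u v => by
      rw [Subsingleton.elim u v, dist_self]
  | succ t =>
    rw [(SierpinskiGraph.graphDiam_succ_le hT hD t).antisymm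
      (SierpinskiGraph.le_graphDiam_succ hT hD t)]
    obtain ⟨d, hd⟩ := Nat.exists_eq_add_of_le' hD
    obtain ⟨r, hr⟩ := Nat.exists_eq_add_of_le' (Nat.lt_two_pow_self (n := t))
    rw [pow_succ, hd, hr]
    simp only [show r + (t + 1) - 1 = r + t by omega, show d + 2 - 1 = d + 1 by omega,
      Nat.add_sub_cancel, show r + (t + 1) - t - 1 = r by omega,
      show 3 * ((r + (t + 1)) * 2) - 2 * (t + 1) - 3 = 6 * r + 4 * t + 1 by omega,
      show (r + (t + 1)) * 2 - (t + 1) - 1 = 2 * r + t by omega]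
    rw [eq_comm, Nat.sub_eq_iff_eq_add (by nlinarith)]
    ring

/-- for a finite tree `T` with at least three vertices and any `t ≥ 1`:
`D(S(T,t)) = (3·2^t − 2t − 3)·D(T) − 4·(2^t − t − 1)`. -/
theorem stmt_16 {V : Type*} [Fintype V] (T : SimpleGraph V) (hT : T.IsTree)
    (hcard : 3 ≤ Fintype.card V) (t : ℕ) (ht : 1 ≤ t) :
    graphDiam (SierpinskiGraph T t) =
      (3 * 2 ^ t - 2 * t - 3) * graphDiam T - 4 * (2 ^ t - t - 1) :=
  stmt_16_general T hT hcard t
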